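/- Under the hypotheses of the non-zero Lie bracket lemma (L₁(w) = (1/n)∑ᵢ L_S(θᵢ) with F = −gradient L₁; L₂ twice continuously differentiable with G = −gradient L₂ and ∇_{θᵢ} L₂ = ∇_{θᵢ} L₁ everywhere for each block i), if θ satisfies gradient L_S θ = 0, then the Lie bracket [F, G] = (fderiv ℝ G ·)(F(·)) − (fderiv ℝ F ·)(G(·)) vanishes at the diagonal point (θ, …, θ, 0). -/

import Mathlib

/-!
Since `∇L_S(θ) = 0`, the gradient of the block average `L₁` vanishes at `(θ,…,θ,0)`, so `F = 0`
there and the term `DG(F)` drops out. The block-gradient hypothesis transfers this to `L₂`: the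
`θ`-blocks of `∇L₂` vanish at `(θ,…,θ,0)`, so `G` points purely in the `η`-direction there.
But `L₁`, hence `F`, is invariant under translations in the `η`-direction, so `DF(G) = 0` as well.
-/

noncomputable section

/-- The parameter space of the big model obtained by self deep fusing a small model
with parameters in `ℝ^{d_s}` `n` times, with extra parameters `η ∈ ℝ^m`:
points `w = (θ₁,…,θₙ,η)`. -/
abbrev Wsp (d_s m n : ℕ) := EuclideanSpace ℝ ((Fin n × Fin d_s) ⊕ Fin m)

/-- The `i`-th parameter block `θᵢ` of a point `w = (θ₁,…,θₙ,η)`. -/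
def blk {d_s m n : ℕ} (w : Wsp d_s m n) (i : Fin n) : EuclideanSpace ℝ (Fin d_s) :=
  WithLp.toLp 2 (fun a => w (Sum.inl (i, a)) : Fin d_s → ℝ)

/-- Replace the `i`-th block of `w` by `θ'`, keeping all other components. -/
def updBlk {d_s m n : ℕ} (w : Wsp d_s m n) (i : Fin n)
    (θ' : EuclideanSpace ℝ (Fin d_s)) : Wsp d_s m n :=
  WithLp.toLp 2 (fun z => Sum.elim (fun p : Fin n × Fin d_s => if p.1 = i then θ' p.2 else w (Sum.inl p))
    (fun b => w (Sum.inr b)) z : ((Fin n × Fin d_s) ⊕ Fin m) → ℝ)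

/-- The diagonal point `(θ,…,θ,0)`. -/
def diagPt {d_s m n : ℕ} (θ : EuclideanSpace ℝ (Fin d_s)) : Wsp d_s m n :=
  WithLp.toLp 2 (fun z => Sum.elim (fun p : Fin n × Fin d_s => θ p.2) (fun _ => (0 : ℝ)) z :
    ((Fin n × Fin d_s) ⊕ Fin m) → ℝ)

section LineConstancy

variable {𝕜 E F : Type*} [NontriviallyNormedField 𝕜] [NormedAddCommGroup E] [NormedSpace 𝕜 E]
  [NormedAddCommGroup F] [NormedSpace 𝕜 F]

theorem fderiv_apply_eq_zero_of_forall_add_smul_eq {g : E → F} {x v : E}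
    (h : ∀ t : 𝕜, g (x + t • v) = g x) : fderiv 𝕜 g x v = 0 := by
  by_cases hg : DifferentiableAt 𝕜 g x
  · rw [← hg.lineDeriv_eq_fderiv, lineDeriv]
    simp [h]
  · simp [fderiv_zero_of_not_differentiableAt hg]

theorem fderiv_add_eq_of_forall_add_eq {f : E → F} {u : E} (h : ∀ x, f (x + u) = f x) (x : E) :
    fderiv 𝕜 f (x + u) = fderiv 𝕜 f x := by
  rw [← fderiv_comp_add_right, funext h]

end LineConstancy

theorem gradient_add_eq_of_forall_add_eq {E : Type*} [NormedAddCommGroup E] [InnerProductSpace ℝ E]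
    [CompleteSpace E] {f : E → ℝ} {u : E} (h : ∀ x, f (x + u) = f x) (x : E) :
    gradient f (x + u) = gradient f x := by
  rw [gradient, fderiv_add_eq_of_forall_add_eq h, gradient]

section Blocks

variable {d_s m n : ℕ}

def blkCLM (i : Fin n) : Wsp d_s m n →L[ℝ] EuclideanSpace ℝ (Fin d_s) :=
  LinearMap.toContinuousLinearMap
    { toFun := fun w => blk w i
      map_add' := fun _ _ => by ext; simp [blk]
      map_smul' := fun _ _ => by ext; simp [blk] }

@[simp] theorem blk_zero (i : Fin n) : blk (0 : Wsp d_s m n) i = 0 := (blkCLM i).map_zero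

@[simp] theorem blk_add (w u : Wsp d_s m n) (i : Fin n) : blk (w + u) i = blk w i + blk u i :=
  (blkCLM i).map_add w u

@[simp] theorem blk_smul (t : ℝ) (w : Wsp d_s m n) (i : Fin n) : blk (t • w) i = t • blk w i :=
  (blkCLM i).map_smul t w

@[simp] theorem blk_neg (w : Wsp d_s m n) (i : Fin n) : blk (-w) i = -blk w i :=
  (blkCLM i).map_neg w

def insBlk (i : Fin n) : EuclideanSpace ℝ (Fin d_s) →L[ℝ] Wsp d_s m n :=
  LinearMap.toContinuousLinearMap
    { toFun := fun θ' => updBlk 0 i θ'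
      map_add' := fun _ _ => by
        ext (⟨j, a⟩ | b)
        · simp only [updBlk, PiLp.add_apply, PiLp.zero_apply, Sum.elim_inl]
          split_ifs <;> simp
        · simp [updBlk]
      map_smul' := fun _ _ => by ext (⟨j, a⟩ | b) <;> simp [updBlk] }

@[simp] theorem insBlk_apply (i : Fin n) (θ' : EuclideanSpace ℝ (Fin d_s)) :
    insBlk (m := m) i θ' = updBlk 0 i θ' := rfl

theorem updBlk_eq_add (w : Wsp d_s m n) (i : Fin n) (θ' : EuclideanSpace ℝ (Fin d_s)) :
    updBlk w i θ' = updBlk w i 0 + insBlk i θ' := by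
  ext (⟨j, a⟩ | b)
  · simp only [updBlk, Sum.elim_inl, PiLp.zero_apply, insBlk_apply, PiLp.add_apply]
    split_ifs <;> simp
  · simp [updBlk]

theorem updBlk_blk (w : Wsp d_s m n) (i : Fin n) : updBlk w i (blk w i) = w := by
  ext (⟨j, a⟩ | b)
  · by_cases h : j = i
    · subst h; simp [updBlk, blk]
    · simp [updBlk, h]
  · rfl

theorem hasFDerivAt_updBlk (w : Wsp d_s m n) (i : Fin n) (θ' : EuclideanSpace ℝ (Fin d_s)) :
    HasFDerivAt (updBlk w i) (insBlk i) θ' := by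
  rw [show updBlk w i = fun θ' => updBlk w i 0 + insBlk i θ' from funext (updBlk_eq_add w i)]
  exact (insBlk i).hasFDerivAt.const_add _

theorem inner_insBlk_right (v : Wsp d_s m n) (i : Fin n) (u : EuclideanSpace ℝ (Fin d_s)) :
    inner ℝ v (insBlk i u) = inner ℝ (blk v i) u := by
  simp [PiLp.inner_apply, updBlk, blk, Fintype.sum_sum_type, Fintype.sum_prod_type]

theorem blk_gradient {f : Wsp d_s m n → ℝ} {w : Wsp d_s m n} (hf : DifferentiableAt ℝ f w)
    (i : Fin n) : blk (gradient f w) i = gradient (fun θ' => f (updBlk w i θ')) (blk w i) := by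
  have hcomp : HasFDerivAt (fun θ' => f (updBlk w i θ')) ((fderiv ℝ f w).comp (insBlk i))
      (blk w i) := by
    have hf' : HasFDerivAt f (fderiv ℝ f w) (updBlk w i (blk w i)) := by
      rw [updBlk_blk]
      exact hf.hasFDerivAt
    exact hf'.comp _ (hasFDerivAt_updBlk w i _)
  refine ext_inner_right ℝ fun u => ?_
  rw [inner_gradient_left, hcomp.fderiv, ← inner_insBlk_right, inner_gradient_left]
  rfl

end Blocks

section BlockAverage

variable {d_s m n : ℕ} {L_S : EuclideanSpace ℝ (Fin d_s) → ℝ}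

theorem hasFDerivAt_blockAverage_diagPt {θ : EuclideanSpace ℝ (Fin d_s)}
    (hθ : HasFDerivAt (𝕜 := ℝ) L_S 0 θ) :
    HasFDerivAt (𝕜 := ℝ) (fun w : Wsp d_s m n => (1 / (n : ℝ)) * ∑ i : Fin n, L_S (blk w i)) 0
      (diagPt θ) := by
  have hterm (i : Fin n) :
      HasFDerivAt (𝕜 := ℝ) (fun w : Wsp d_s m n => L_S (blk w i)) 0 (diagPt θ) := by
    have h := hθ.comp (diagPt θ) (blkCLM (m := m) i).hasFDerivAt
    rwa [ContinuousLinearMap.zero_comp] at h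
  simpa using (HasFDerivAt.fun_sum fun i _ => hterm i).const_mul (1 / (n : ℝ))

end BlockAverage

theorem stmt_16_general (d_s m n : ℕ)
    (L_S : EuclideanSpace ℝ (Fin d_s) → ℝ) (hLS : ContDiff ℝ 2 L_S)
    (L₁ : Wsp d_s m n → ℝ)
    (hL₁ : L₁ = fun w => (1 / (n : ℝ)) * ∑ i : Fin n, L_S (blk w i))
    (L₂ : Wsp d_s m n → ℝ) (hL₂ : ContDiff ℝ 2 L₂)
    (F G : Wsp d_s m n → Wsp d_s m n)
    (hF : F = fun w => -gradient L₁ w) (hG : G = fun w => -gradient L₂ w)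
    (hpart : ∀ (w : Wsp d_s m n) (i : Fin n),
      gradient (fun θ' => L₂ (updBlk w i θ')) (blk w i)
        = gradient (fun θ' => L₁ (updBlk w i θ')) (blk w i))
    (θ : EuclideanSpace ℝ (Fin d_s)) (hθ : gradient L_S θ = 0) :
    fderiv ℝ G (diagPt θ) (F (diagPt θ))
      - fderiv ℝ F (diagPt θ) (G (diagPt θ)) = 0 := by
  have hLS₀ : HasFDerivAt (𝕜 := ℝ) L_S 0 θ := by
    have h := ((hLS.differentiable two_ne_zero) θ).hasGradientAt
    rw [hθ, hasGradientAt_iff_hasFDerivAt] at h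
    simpa using h
  have hL₁₀ : HasFDerivAt (𝕜 := ℝ) L₁ 0 (diagPt θ) := hL₁ ▸ hasFDerivAt_blockAverage_diagPt hLS₀
  have hgrad₁ : gradient L₁ (diagPt θ) = 0 := by simp [gradient, hL₁₀.fderiv]
  have hG_blk (i : Fin n) : blk (G (diagPt θ)) i = 0 := by
    rw [hG, blk_neg, blk_gradient ((hL₂.differentiable two_ne_zero) _), hpart,
      ← blk_gradient hL₁₀.differentiableAt, hgrad₁, blk_zero, neg_zero]
  have hF_shift (w u : Wsp d_s m n) (hu : ∀ i, blk u i = 0) : F (w + u) = F w := by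
    have hL₁_shift (w : Wsp d_s m n) : L₁ (w + u) = L₁ w := by simp [hL₁, hu]
    simp only [hF, gradient_add_eq_of_forall_add_eq hL₁_shift]
  have hF₀ : F (diagPt θ) = 0 := by simp [hF, hgrad₁]
  rw [hF₀, map_zero, zero_sub, neg_eq_zero]
  exact fderiv_apply_eq_zero_of_forall_add_smul_eq fun t =>
    hF_shift _ _ fun i => by simp [hG_blk]

/-- **Corollary to the non-zero Lie bracket lemma.** Under the hypotheses of the
non-zero Lie bracket lemma, if `∇L_S(θ) = 0`, then the Lie bracket
`[F,G] = (∇G)(F) − (∇F)(G)` vanishes at the diagonal point `(θ,…,θ,0)`. -/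
theorem stmt_16 (d_s m n : ℕ) (hn : 1 ≤ n)
    (L_S : EuclideanSpace ℝ (Fin d_s) → ℝ) (hLS : ContDiff ℝ 2 L_S)
    (L₁ : Wsp d_s m n → ℝ)
    (hL₁ : L₁ = fun w => (1 / (n : ℝ)) * ∑ i : Fin n, L_S (blk w i))
    (L₂ : Wsp d_s m n → ℝ) (hL₂ : ContDiff ℝ 2 L₂)
    (F G : Wsp d_s m n → Wsp d_s m n)
    (hF : F = fun w => -gradient L₁ w) (hG : G = fun w => -gradient L₂ w)
    (hpart : ∀ (w : Wsp d_s m n) (i : Fin n),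
      gradient (fun θ' => L₂ (updBlk w i θ')) (blk w i)
        = gradient (fun θ' => L₁ (updBlk w i θ')) (blk w i))
    (θ : EuclideanSpace ℝ (Fin d_s)) (hθ : gradient L_S θ = 0) :
    fderiv ℝ G (diagPt θ) (F (diagPt θ))
      - fderiv ℝ F (diagPt θ) (G (diagPt θ)) = 0 :=
  stmt_16_general d_s m n L_S hLS L₁ hL₁ L₂ hL₂ F G hF hG hpart θ hθ
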